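/- arXiv:math/0408358 — 7 statements merged into one kernel-verified Lean document; each statement's English description precedes it below -/
import Mathlib

section
/- Let p be a prime number and n a positive integer. In the ring of polynomials over ℤ in n variables x_1, …, x_n, there exists an element g belonging to the subring generated by the elementary symmetric polynomials e_1, …, e_n in x_1, …, x_n such that x_1^p + x_2^p + ⋯ + x_n^p = (x_1 + x_2 + ⋯ + x_n)^p + p·g. -/
open MvPolynomial

/-!
Expanding the `p`-th power of a sum, every multinomial coefficient other than those of the pure
powers is divisible by `p`, so `(∑ xᵢ)^p = ∑ xᵢ^p + p·r`. The correction `p·r` is symmetric, and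
since `ℤ[x]` is a domain, `r` is symmetric as well; by the fundamental theorem of symmetric
polynomials `r` is then a polynomial in `e₁, …, eₙ`, and `g = -r` works.
-/

theorem exists_sum_pow_prime_eq {ι R : Type*} [CommSemiring R] {p : ℕ} (hp : p.Prime)
    (s : Finset ι) (f : ι → R) : ∃ r, (∑ i ∈ s, f i) ^ p = ∑ i ∈ s, f i ^ p + p * r := by
  classical
  induction s using Finset.induction_on with
  | empty => exact ⟨0, by simp [zero_pow hp.ne_zero]⟩
  | insert a s ha ih =>
    obtain ⟨r, hr⟩ := ih
    obtain ⟨t, ht⟩ := exists_add_pow_prime_eq hp (f a) (∑ i ∈ s, f i)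
    refine ⟨r + f a * (∑ i ∈ s, f i) * t, ?_⟩
    rw [Finset.sum_insert ha, Finset.sum_insert ha, ht, hr]
    ring

theorem Set.range_fin_add_one_eq_image_Icc {α : Type*} (f : ℕ → α) (n : ℕ) :
    Set.range (fun i : Fin n => f (i + 1)) = f '' Set.Icc 1 n := by
  ext x
  constructor
  · rintro ⟨i, rfl⟩
    exact ⟨i + 1, ⟨by omega, by omega⟩, rfl⟩
  · rintro ⟨k, ⟨hk₁, hk₂⟩, rfl⟩
    exact ⟨⟨k - 1, by omega⟩, congrArg f (Nat.sub_add_cancel hk₁)⟩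

namespace MvPolynomial

variable {σ R : Type*}

theorem IsSymmetric.of_C_mul [CommRing R] [IsDomain R] {a : R} (ha : a ≠ 0)
    {φ : MvPolynomial σ R} (h : (MvPolynomial.C a * φ).IsSymmetric) : φ.IsSymmetric :=
  fun e => mul_left_cancel₀ (C_ne_zero.mpr ha) <| by rw [← h e, map_mul, rename_C]

theorem IsSymmetric.mem_adjoin_esymm [CommRing R] [Fintype σ] {φ : MvPolynomial σ R}
    (hφ : φ.IsSymmetric) :
    φ ∈ Algebra.adjoin R (esymm σ R '' Set.Icc 1 (Fintype.card σ)) := by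
  obtain ⟨q, hq⟩ := esymmAlgHom_surjective R le_rfl (⟨φ, hφ⟩ : symmetricSubalgebra σ R)
  rw [← Set.range_fin_add_one_eq_image_Icc, Algebra.adjoin_range_eq_range_aeval]
  exact ⟨q, (esymmAlgHom_apply q).symm.trans (congrArg Subtype.val hq)⟩

end MvPolynomial

theorem powerSum_prime_eq_sum_pow_add_prime_mul_general
    (p : ℕ) (hp : p.Prime) (n : ℕ) :
    ∃ g ∈ Subring.closure (MvPolynomial.esymm (Fin n) ℤ '' Set.Icc 1 n),
      (∑ i : Fin n, (X i : MvPolynomial (Fin n) ℤ) ^ p)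
        = (∑ i : Fin n, (X i : MvPolynomial (Fin n) ℤ)) ^ p + p * g := by
  obtain ⟨r, hr⟩ := exists_sum_pow_prime_eq hp Finset.univ (X : Fin n → MvPolynomial (Fin n) ℤ)
  have hpr : (C (p : ℤ) * r).IsSymmetric := by
    rw [map_natCast, eq_sub_of_add_eq' hr.symm, ← psum_one]
    exact IsSymmetric.sub ((symmetricSubalgebra _ ℤ).pow_mem (psum_isSymmetric _ ℤ 1) p)
      (psum_isSymmetric _ ℤ p)
  have hmem := (hpr.of_C_mul (by exact_mod_cast hp.ne_zero)).neg.mem_adjoin_esymm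
  rw [Fintype.card_fin] at hmem
  refine ⟨-r, ?_, by rw [hr]; ring⟩
  exact Algebra.adjoin_le (S := subalgebraOfSubring (Subring.closure _)) Subring.subset_closure hmem

/-- For a prime `p`, the power sum `x₁^p + ⋯ + xₙ^p` differs from
`(x₁ + ⋯ + xₙ)^p` by `p` times an element of the subring generated by the
elementary symmetric polynomials `e₁, …, eₙ`. -/
theorem powerSum_prime_eq_sum_pow_add_prime_mul
    (p : ℕ) (hp : p.Prime) (n : ℕ) (hn : 0 < n) :
    ∃ g ∈ Subring.closure (MvPolynomial.esymm (Fin n) ℤ '' Set.Icc 1 n),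
      (∑ i : Fin n, (X i : MvPolynomial (Fin n) ℤ) ^ p)
        = (∑ i : Fin n, (X i : MvPolynomial (Fin n) ℤ)) ^ p + p * g :=
  powerSum_prime_eq_sum_pow_add_prime_mul_general p hp n
end

section
/- Let r be a prime number, ζ ∈ ℂ a primitive r-th root of unity, and a_0, a_1, …, a_{r−2} integers. If the sum Σ_{n=0}^{r−2} a_n·(1−ζ)^n belongs to (1−ζ)^{r−1}·ℤ[ζ], i.e. there exists x ∈ ℤ[ζ] with Σ_{n=0}^{r−2} a_n·(1−ζ)^n = (1−ζ)^{r−1}·x, then r divides a_n for every n with 0 ≤ n ≤ r−2. -/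
open Polynomial

private lemma cyclotomic_zmod_prime (p : ℕ) [hp : Fact p.Prime] :
    cyclotomic p (ZMod p) = (X - 1) ^ (p - 1) := by
  have hX : (X - 1 : (ZMod p)[X]) ≠ 0 := X_sub_C_ne_zero 1
  apply mul_right_cancel₀ hX
  rw [cyclotomic_prime, geom_sum_mul, ← pow_succ, Nat.sub_add_cancel hp.out.one_lt.le,
    sub_pow_char, one_pow]

/-- The coefficients of the `(1 - ζ)`-adic expansion of an element of `ℤ[ζ]`
are well defined modulo `r`: if `Σ_{n=0}^{r-2} aₙ (1-ζ)ⁿ ∈ (1-ζ)^{r-1} ℤ[ζ]`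
then `r ∣ aₙ` for all `n ≤ r - 2`. -/
theorem oneSubZeta_adic_coeffs_welldefined
    (r : ℕ) (hr : r.Prime) (ζ : ℂ) (hζ : IsPrimitiveRoot ζ r)
    (a : ℕ → ℤ)
    (h : ∃ x ∈ Subring.closure ({ζ} : Set ℂ),
      (∑ n ∈ Finset.range (r - 1), (a n : ℂ) * (1 - ζ) ^ n) = (1 - ζ) ^ (r - 1) * x) :
    ∀ n < r - 1, (r : ℤ) ∣ a n := by
  haveI : Fact r.Prime := ⟨hr⟩
  obtain ⟨x, hx, hsum⟩ := h
  have hx' : x ∈ Algebra.adjoin ℤ ({ζ} : Set ℂ) := by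
    have hle : Subring.closure ({ζ} : Set ℂ) ≤ (Algebra.adjoin ℤ ({ζ} : Set ℂ)).toSubring :=
      Subring.closure_le.mpr Algebra.subset_adjoin
    exact hle hx
  rw [Algebra.adjoin_singleton_eq_range_aeval] at hx'
  obtain ⟨p, hp⟩ := hx'
  set A : ℤ[X] := ∑ i ∈ Finset.range (r - 1), C (a i) * X ^ i with hA
  set F : ℤ[X] := A.comp (1 - X) - (1 - X) ^ (r - 1) * p with hFdef
  have hAeval : aeval (1 - ζ) A = ∑ n ∈ Finset.range (r - 1), (a n : ℂ) * (1 - ζ) ^ n := by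
    simp [hA]
  have hFζ : aeval ζ F = 0 := by
    simp only [hFdef, map_sub, map_mul, map_pow, aeval_comp, map_one, aeval_X]
    rw [hAeval, hsum, show (aeval ζ) p = x from hp, sub_self]
  have hdvd : cyclotomic r ℤ ∣ F := by
    rw [cyclotomic_eq_minpoly hζ hr.pos]
    exact minpoly.isIntegrallyClosed_dvd (hζ.isIntegral hr.pos) hFζ
  obtain ⟨G, hG⟩ := hdvd
  have hXX : ((1 : ℤ[X]) - X).comp (1 - X) = X := by
    simp [sub_comp]
  have hcomp : F.comp (1 - X) = A - X ^ (r - 1) * p.comp (1 - X) := by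
    simp only [hFdef, sub_comp, mul_comp, pow_comp, comp_assoc, hXX, comp_X]
  intro n hn
  -- map everything to ZMod r
  have key : (X : (ZMod r)[X]) ^ (r - 1) ∣
      (A - X ^ (r - 1) * p.comp (1 - X)).map (Int.castRingHom (ZMod r)) := by
    rw [← hcomp, hG, mul_comp, Polynomial.map_mul, Polynomial.map_comp, map_cyclotomic,
      cyclotomic_zmod_prime]
    refine Dvd.dvd.mul_right ?_ _
    have : ((X - 1 : (ZMod r)[X]) ^ (r - 1)).comp ((1 - X : ℤ[X]).map (Int.castRingHom (ZMod r)))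
        = (-X) ^ (r - 1) := by
      simp [pow_comp, sub_comp]
    rw [this, neg_pow]
    exact dvd_mul_left _ _
  have hc0 : ((A - X ^ (r - 1) * p.comp (1 - X)).map (Int.castRingHom (ZMod r))).coeff n = 0 :=
    X_pow_dvd_iff.mp key n hn
  have hcA : (A - X ^ (r - 1) * p.comp (1 - X)).coeff n = a n := by
    have h1 : (X ^ (r - 1) * p.comp (1 - X) : ℤ[X]).coeff n = 0 :=
      X_pow_dvd_iff.mp (dvd_mul_right _ _) n hn
    have h2 : A.coeff n = a n := by
      simp [hA, finset_sum_coeff, coeff_C_mul, coeff_X_pow, Finset.sum_ite_eq', hn]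
    rw [coeff_sub, h1, h2, sub_zero]
  rw [coeff_map, hcA] at hc0
  exact (ZMod.intCast_zmod_eq_zero_iff_dvd _ _).mp hc0
end

section
/- Let G be a finite abelian group (written additively) and let z : G → ℚ be a function such that: (i) for all g ∈ G and all integers n, z(n·g) − n²·z(g) ∈ ℤ; and (ii) setting b(g,h) := z(g+h) − z(g) − z(h), for all g, g', h ∈ G one has b(g+g', h) − b(g,h) − b(g',h) ∈ ℤ (so that b is a symmetric bilinear form modulo ℤ). Let K = { g ∈ G : b(g,h) ∈ ℤ for all h ∈ G }. Then the Gauss sum S = Σ_{g ∈ G} exp(2πi·z(g)) satisfies either S = 0 or S^8 = (|K|·|G|)^4; equivalently, S = √(|K|·|G|)·ε where ε is 0 or an eighth root of unity. -/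
/-!
Write `e = exp (2πi ·)`, view `z` as a quadratic map `Q : G → ℚ/ℤ ⊆ ℝ/ℤ` and put
`S(Q) = Σ e(Q g)`. Substituting `g = k + h` in `S(Q) S(-Q)` leaves the character sums
`Σ_h e(b(k, h))`, which vanish off the radical `K`; on `K` the map `Q` is additive, so
`S(Q) S(-Q)` is `|G| |K|` or `0`.

It remains to see `S(-Q)⁴ = S(Q)⁴`. By Lagrange, `D = |G|² - 1 = a² + b² + c² + d²`. Left
multiplication by the quaternion `a + bi + cj + dk` is a similitude of ratio `D`; it acts
bijectively on `G⁴` because `D² ≡ 1 mod |G|`, and it turns `Q ⊕ Q ⊕ Q ⊕ Q` into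
`D • (Q ⊕ Q ⊕ Q ⊕ Q)`, which is its negative since `|G|² • Q = 0`. Hence
`S(Q)⁸ = (S(Q) S(-Q))⁴`.
-/

open Finset Matrix

theorem AddChar.map_sum {A M ι : Type*} [AddCommMonoid A] [CommMonoid M] (ψ : AddChar A M)
    (s : Finset ι) (f : ι → A) : ψ (∑ i ∈ s, f i) = ∏ i ∈ s, ψ (f i) := by
  classical
  induction s using Finset.induction_on with
  | empty => simp
  | insert i s hi ih => rw [sum_insert hi, prod_insert hi, map_add_eq_mul, ih]

def quaternionMatrix {R : Type*} [CommRing R] (a b c d : R) : Matrix (Fin 4) (Fin 4) R :=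
  !![a, -b, -c, -d; b, a, -d, c; c, d, a, -b; d, -c, b, a]

theorem quaternionMatrix_transpose_mul_self {R : Type*} [CommRing R] (a b c d : R) :
    (quaternionMatrix a b c d)ᵀ * quaternionMatrix a b c d =
      (a ^ 2 + b ^ 2 + c ^ 2 + d ^ 2) • 1 := by
  ext i j
  fin_cases i <;> fin_cases j <;>
    simp [quaternionMatrix, Matrix.mul_apply, Fin.sum_univ_four] <;> ring

theorem Matrix.bijective_sum_smul_of_transpose_mul_self {ι R M : Type*} [Fintype ι]
    [DecidableEq ι] [CommRing R] [AddCommGroup M] [Module R M] [Finite M]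
    {A : Matrix ι ι R} {D : R}
    (hA : Aᵀ * A = D • 1) (hD : ∀ m : M, D • m = 0 → m = 0) :
    Function.Bijective fun (x : ι → M) i => ∑ j, A i j • x j := by
  refine Finite.injective_iff_bijective.1 fun x y hxy => funext fun k => ?_
  have hAk (j : ι) : ∑ i, A i k * A i j = if k = j then D else 0 := by
    simpa [Matrix.mul_apply, Matrix.one_apply] using congrFun (congrFun hA k) j
  have htranspose (x : ι → M) : ∑ i, A i k • ∑ j, A i j • x j = D • x k := by
    simp only [smul_sum, smul_smul]
    rw [sum_comm]
    simp [← sum_smul, hAk]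
  simp only [funext_iff] at hxy
  rw [← sub_eq_zero]
  apply hD
  rw [smul_sub, ← htranspose, ← htranspose]
  simp only [hxy, sub_self]

namespace QuadraticMap

section Module

variable {R M N : Type*} [CommRing R] [AddCommGroup M] [Module R M] [AddCommGroup N]
  [Module R N]

theorem sum_map_sum_smul_of_transpose_mul_self {ι : Type*} [Fintype ι] [DecidableEq ι]
    (Q : QuadraticMap R M N) {A : Matrix ι ι R} {D : R} (hA : Aᵀ * A = D • 1) (x : ι → M) :
    ∑ i, Q (∑ j, A i j • x j) = D • ∑ j, Q (x j) := by
  have hdiag (j : ι) : ∑ i, A i j * A i j = D := by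
    simpa [Matrix.mul_apply] using congrFun (congrFun hA j) j
  have hoff : ∑ p ∈ univ.sym2 with ¬ p.IsDiag,
      (∑ i, (p.map (A i)).mul) • polarSym2 Q (p.map x) = 0 := by
    refine sum_eq_zero fun p hp => ?_
    obtain ⟨a, b⟩ := p
    have hab : a ≠ b := (mem_filter.1 hp).2
    have := congrFun (congrFun hA a) b
    simp_all [Matrix.mul_apply]
  calc ∑ i, Q (∑ j, A i j • x j)
      = ∑ i, (∑ j, (A i j * A i j) • Q (x j)
          + ∑ p ∈ univ.sym2 with ¬ p.IsDiag, (p.map (A i)).mul • polarSym2 Q (p.map x)) := by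
        refine sum_congr rfl fun i _ => ?_
        rw [Q.map_sum]
        congr 1
        · simp [QuadraticMap.map_smul]
        · exact sum_congr rfl fun p _ => polarSym2_map_smul Q x (A i) p
    _ = ∑ j, (∑ i, A i j * A i j) • Q (x j)
          + ∑ p ∈ univ.sym2 with ¬ p.IsDiag,
              (∑ i, (p.map (A i)).mul) • polarSym2 Q (p.map x) := by
        rw [sum_add_distrib]
        simp only [sum_smul]
        rw [sum_comm, sum_comm (s := univ.sym2.filter _)]
    _ = D • ∑ j, Q (x j) := by
        rw [hoff, add_zero, smul_sum]
        simp only [hdiag]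

def restrictKerPolar (Q : QuadraticMap R M N) : LinearMap.ker Q.polarBilin →+ N where
  toFun k := Q k
  map_zero' := Q.map_zero
  map_add' k k' := by
    have hkk' : polar Q k k' = 0 := by
      rw [← polarBilin_apply_apply, LinearMap.mem_ker.1 k.2, LinearMap.zero_apply]
    rw [Submodule.coe_add, QuadraticMap.map_add (⇑Q), hkk', add_zero]

@[simp]
theorem restrictKerPolar_apply (Q : QuadraticMap R M N) (k : LinearMap.ker Q.polarBilin) :
    Q.restrictKerPolar k = Q k := rfl

end Module

section GaussSum

variable {G N R : Type*} [AddCommGroup G] [Fintype G] [AddCommGroup N] [CommRing R]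

def gaussSum (Q : QuadraticMap ℤ G N) (ψ : AddChar N R) : R := ∑ g, ψ (Q g)

variable (Q : QuadraticMap ℤ G N) (ψ : AddChar N R)

theorem gaussSum_pow (n : ℕ) : Q.gaussSum ψ ^ n = ∑ x : Fin n → G, ψ (∑ i, Q (x i)) := by
  simp only [gaussSum, Fintype.sum_pow, AddChar.map_sum]

theorem card_sq_smul_eq_zero (g : G) : ((Fintype.card G : ℤ) ^ 2) • Q g = 0 := by
  rw [pow_two, ← QuadraticMap.map_smul, natCast_zsmul, card_nsmul_eq_zero, QuadraticMap.map_zero]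

theorem gaussSum_neg_pow_four : (-Q).gaussSum ψ ^ 4 = Q.gaussSum ψ ^ 4 := by
  set n : ℤ := ↑(Fintype.card G)
  obtain ⟨a, b, c, d, habcd⟩ := Nat.sum_four_squares (Fintype.card G ^ 2 - 1)
  set A := quaternionMatrix (a : ℤ) b c d
  have hA : Aᵀ * A = (n ^ 2 - 1) • 1 := by
    have hn : 1 ≤ Fintype.card G ^ 2 := Nat.one_le_pow _ _ Fintype.card_pos
    zify [hn] at habcd
    rw [quaternionMatrix_transpose_mul_self, habcd]
  have hD (g : G) (hg : (n ^ 2 - 1) • g = 0) : g = 0 := by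
    have hng : n • g = 0 := by simp [n]
    calc g = ((n ^ 2 - 1) * (n ^ 2 - 1) - (n ^ 3 - 2 * n) * n) • g := by
          rw [show (n ^ 2 - 1) * (n ^ 2 - 1) - (n ^ 3 - 2 * n) * n = 1 by ring, one_smul]
      _ = 0 := by rw [sub_smul, mul_smul, mul_smul, hg, hng, smul_zero, smul_zero, sub_zero]
  have hDQ (g : G) : (n ^ 2 - 1) • Q g = -Q g := by
    rw [sub_smul, card_sq_smul_eq_zero, one_smul, zero_sub]
  rw [gaussSum_pow, gaussSum_pow]
  calc ∑ x : Fin 4 → G, ψ (∑ i, (-Q) (x i))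
      = ∑ x : Fin 4 → G, ψ (∑ i, Q (∑ j, A i j • x j)) := by
        simp [Q.sum_map_sum_smul_of_transpose_mul_self hA, smul_sum, hDQ]
    _ = ∑ x : Fin 4 → G, ψ (∑ i, Q (x i)) :=
        (Matrix.bijective_sum_smul_of_transpose_mul_self hA hD).sum_comp
          fun x => ψ (∑ i, Q (x i))

variable [IsDomain R] {ψ}

theorem sum_polar_eq_ite (hψ : Function.Injective ψ) (k : G)
    [Decidable (k ∈ LinearMap.ker Q.polarBilin)] :
    ∑ h, ψ (polar Q k h) =
      if k ∈ LinearMap.ker Q.polarBilin then (Fintype.card G : R) else 0 := by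
  have hk : ψ.compAddMonoidHom (Q.polarBilin k).toAddMonoidHom = 0 ↔
      k ∈ LinearMap.ker Q.polarBilin := by
    simp only [AddChar.ext_iff, LinearMap.mem_ker, LinearMap.ext_iff,
      AddChar.compAddMonoidHom_apply, AddChar.zero_apply, LinearMap.zero_apply, ← hψ.eq_iff,
      AddChar.map_zero_eq_one]
    rfl
  classical
  have := AddChar.sum_eq_ite (ψ.compAddMonoidHom (Q.polarBilin k).toAddMonoidHom)
  simp only [hk, AddChar.compAddMonoidHom_apply, LinearMap.toAddMonoidHom_coe,
    polarBilin_apply_apply] at this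
  convert this

theorem gaussSum_mul_gaussSum_neg (hψ : Function.Injective ψ)
    [Fintype (LinearMap.ker Q.polarBilin)] :
    Q.gaussSum ψ * (-Q).gaussSum ψ =
      Fintype.card G * ∑ k : LinearMap.ker Q.polarBilin, ψ (Q k) := by
  classical
  calc Q.gaussSum ψ * (-Q).gaussSum ψ
      = ∑ h, ∑ k, ψ (Q (k + h)) * ψ (-Q h) := by
        rw [gaussSum, gaussSum, sum_mul_sum, sum_comm]
        refine sum_congr rfl fun h _ => ?_
        exact (Equiv.sum_comp (Equiv.addRight h) fun g => ψ (Q g) * ψ ((-Q) h)).symm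
    _ = ∑ k, ψ (Q k) * ∑ h, ψ (polar Q k h) := by
        rw [sum_comm]
        refine sum_congr rfl fun k _ => ?_
        rw [mul_sum]
        refine sum_congr rfl fun h _ => ?_
        rw [← AddChar.map_add_eq_mul, ← AddChar.map_add_eq_mul, QuadraticMap.map_add (⇑Q)]
        congr 1
        abel
    _ = Fintype.card G * ∑ k : LinearMap.ker Q.polarBilin, ψ (Q k) := by
        simp only [Q.sum_polar_eq_ite hψ, mul_ite, mul_zero, ← sum_filter]
        rw [sum_subtype (p := (· ∈ LinearMap.ker Q.polarBilin)) (F := ‹_›) _ (by simp),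
          mul_sum]
        simp only [mul_comm]

theorem gaussSum_mul_gaussSum_neg_eq_zero_or (hψ : Function.Injective ψ) :
    Q.gaussSum ψ * (-Q).gaussSum ψ = 0 ∨
      Q.gaussSum ψ * (-Q).gaussSum ψ =
        Nat.card (LinearMap.ker Q.polarBilin) * Fintype.card G := by
  classical
  rw [Q.gaussSum_mul_gaussSum_neg hψ, Nat.card_eq_fintype_card]
  have := AddChar.sum_eq_ite (ψ.compAddMonoidHom Q.restrictKerPolar)
  simp only [AddChar.compAddMonoidHom_apply, restrictKerPolar_apply] at this
  rw [this]
  split_ifs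
  · exact Or.inr (mul_comm _ _)
  · exact Or.inl (mul_zero _)

theorem gaussSum_eq_zero_or_pow_eight (hψ : Function.Injective ψ) :
    Q.gaussSum ψ = 0 ∨
      Q.gaussSum ψ ^ 8 = ((Nat.card (LinearMap.ker Q.polarBilin) : R) * Fintype.card G) ^ 4 := by
  have hpow : Q.gaussSum ψ ^ 8 = (Q.gaussSum ψ * (-Q).gaussSum ψ) ^ 4 := by
    rw [mul_pow, Q.gaussSum_neg_pow_four, ← pow_add]
  rcases Q.gaussSum_mul_gaussSum_neg_eq_zero_or hψ with h | h
  · rw [h, zero_pow four_ne_zero, pow_eq_zero_iff (by norm_num)] at hpow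
    exact Or.inl hpow
  · exact Or.inr (h ▸ hpow)

end GaussSum

end QuadraticMap

noncomputable def ratModInt : ℚ →+ AddCircle (1 : ℝ) :=
  (QuotientAddGroup.mk' _).comp (Rat.castHom ℝ).toAddMonoidHom

theorem ratModInt_eq_zero_iff {x : ℚ} : ratModInt x = 0 ↔ ∃ m : ℤ, x = m := by
  simp only [ratModInt, AddMonoidHom.coe_comp, Function.comp_apply, QuotientAddGroup.coe_mk',
    AddCircle.coe_eq_zero_iff, zsmul_eq_mul, mul_one, RingHom.toAddMonoidHom_eq_coe,
    AddMonoidHom.coe_coe, eq_ratCast]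
  exact exists_congr fun m => by rw [eq_comm]; exact_mod_cast Iff.rfl

theorem ratModInt_eq_iff {x y : ℚ} : ratModInt x = ratModInt y ↔ ∃ m : ℤ, x - y = m := by
  rw [← sub_eq_zero, ← map_sub, ratModInt_eq_zero_iff]

noncomputable def expChar : AddChar (AddCircle (1 : ℝ)) ℂ :=
  Circle.coeHom.compAddChar AddCircle.toCircle_addChar

theorem expChar_injective : Function.Injective expChar :=
  Subtype.coe_injective.comp (AddCircle.injective_toCircle one_ne_zero)

theorem expChar_ratModInt (x : ℚ) :
    expChar (ratModInt x) = Complex.exp (2 * Real.pi * Complex.I * x) := by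
  change (Circle.exp (2 * Real.pi / 1 * (x : ℝ)) : ℂ) = _
  rw [Circle.coe_exp]
  push_cast
  ring_nf

noncomputable def QuadraticMap.ofRatModInt {G : Type*} [AddCommGroup G] (z : G → ℚ)
    (h1 : ∀ (g : G) (n : ℤ), ∃ m : ℤ, z (n • g) - (n : ℚ) ^ 2 * z g = m)
    (h2 : ∀ g g' h : G,
      ∃ m : ℤ, ((z (g + g' + h) - z (g + g') - z h)
        - (z (g + h) - z g - z h)) - (z (g' + h) - z g' - z h) = m) :
    QuadraticMap ℤ G (AddCircle (1 : ℝ)) :=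
  have polar_add_left (x x' y : G) : polar (ratModInt ∘ z) (x + x') y =
      polar (ratModInt ∘ z) x y + polar (ratModInt ∘ z) x' y := by
    simp only [polar_comp, ← map_add]
    obtain ⟨m, hm⟩ := h2 x x' y
    exact ratModInt_eq_iff.2 ⟨m, by rw [← hm]; simp only [polar]; ring⟩
  .ofPolar (ratModInt ∘ z)
    (fun a x => by
      rw [Function.comp_apply, Function.comp_apply, ← map_zsmul, zsmul_eq_mul, Int.cast_mul,
        ← pow_two]
      exact ratModInt_eq_iff.2 (h1 x a))
    polar_add_left
    (fun a x y => map_zsmul (AddMonoidHom.mk' (polar (ratModInt ∘ z) · y)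
      fun x x' => polar_add_left x x' y) a x)

@[simp]
theorem QuadraticMap.ofRatModInt_apply {G : Type*} [AddCommGroup G] (z : G → ℚ) (h1 h2)
    (g : G) : QuadraticMap.ofRatModInt z h1 h2 g = ratModInt (z g) := rfl

/-- Deloup's lemma on Gauss sums: if `z : G → ℚ` is a quadratic form modulo `ℤ`
on a finite abelian group `G`, with associated bilinear form `b` (mod `ℤ`) and
kernel `K = ker (ad b)`, then the Gauss sum `S = Σ_g exp(2πi z(g))` satisfies
`S = 0` or `S^8 = (|K| |G|)^4`, i.e. `S = √(|K||G|) ε` with `ε` zero or an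
eighth root of unity. -/
theorem gauss_sum_eq_sqrt_mul_eighth_root
    (G : Type*) [AddCommGroup G] [Fintype G]
    (z : G → ℚ)
    (h1 : ∀ (g : G) (n : ℤ), ∃ m : ℤ, z (n • g) - (n : ℚ) ^ 2 * z g = m)
    (h2 : ∀ g g' h : G,
      ∃ m : ℤ, ((z (g + g' + h) - z (g + g') - z h)
        - (z (g + h) - z g - z h)) - (z (g' + h) - z g' - z h) = m) :
    (∑ g : G, Complex.exp (2 * Real.pi * Complex.I * (z g : ℂ))) = 0 ∨
    (∑ g : G, Complex.exp (2 * Real.pi * Complex.I * (z g : ℂ))) ^ 8 =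
      ((Nat.card {g : G | ∀ h : G, ∃ m : ℤ, z (g + h) - z g - z h = m} : ℂ)
        * (Fintype.card G : ℂ)) ^ 4 := by
  set Q := QuadraticMap.ofRatModInt z h1 h2
  have hS :
      ∑ g : G, Complex.exp (2 * Real.pi * Complex.I * (z g : ℂ)) = Q.gaussSum expChar := by
    simp [QuadraticMap.gaussSum, Q, expChar_ratModInt]
  have hK : {g : G | ∀ h : G, ∃ m : ℤ, z (g + h) - z g - z h = m} =
      (LinearMap.ker Q.polarBilin : Set G) := by
    ext g
    simp [Q, LinearMap.ext_iff, QuadraticMap.polar, ← map_sub, ratModInt_eq_zero_iff]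
  rw [hS, hK]
  exact Q.gaussSum_eq_zero_or_pow_eight expChar_injective
end

section
/- Let r ≥ 7 be a prime and ζ ∈ ℂ a primitive r-th root of unity. Define τ_P = Σ_{n=0}^{r−2} ζ^n · (1 + ζ + ⋯ + ζ^n) · Π_{j=n+2}^{2n+1} (1 − ζ^j), an element of ℤ[ζ]. Then for every integer v there is no y ∈ ℤ[ζ] with τ_P − ζ^v·conj(τ_P) = r·y, where conj denotes complex conjugation. -/
/-!
Write `ζ ^ v = ζ ^ w` with `w ∈ ℕ` and `y = Y(ζ)` with `Y ∈ ℤ[X]`. As `conj ζ = ζ ^ (r - 1)`, the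
congruence says that `Q = τ(X) - X ^ w τ(X ^ (r - 1)) - r Y` vanishes at `ζ`, so `Φ_r ∣ Q` and `Q`
vanishes at `1 + ε` in any `𝔽_r`-algebra where `ε ^ (r - 1) = 0`. In `𝔽_r[ε]/(ε⁴)` the conjugate
`ζ⁻¹` becomes `(1 + ε)⁻¹`, only the terms `n < 4` of `τ` survive, and the congruence reads
`(1 + ε) ^ w (1 + 6ε + 39ε² + 380ε³) = 1 - 6ε + 45ε² - 464ε³`, that is,
`(1 + ε) ^ (w + 12) = 1 - 480ε³`. The coefficient of `ε` forces `r ∣ w + 12`; then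
`(1 + ε) ^ (w + 12) = 1` by Frobenius, so `r ∣ 480`.
-/

open Polynomial Finset

noncomputable def tauP (m : ℕ) : ℤ[X] :=
  ∑ n ∈ range m, X ^ n * (∑ k ∈ range (n + 1), X ^ k) *
    ∏ j ∈ Icc (n + 2) (2 * n + 1), (1 - X ^ j)

section CommRing

variable {S : Type*} [CommRing S]

lemma aeval_tauP (z : S) (m : ℕ) :
    aeval z (tauP m) = ∑ n ∈ range m, z ^ n * (∑ k ∈ range (n + 1), z ^ k) *
      ∏ j ∈ Icc (n + 2) (2 * n + 1), (1 - z ^ j) := by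
  simp [tauP]

lemma aeval_tauP_eq_of_dvd_sub_one {ε z : S} {k m : ℕ} (hε : ε ^ k = 0) (hz : ε ∣ z - 1)
    (hkm : k ≤ m) : aeval z (tauP m) = aeval z (tauP k) := by
  rw [aeval_tauP, aeval_tauP, ← sum_range_add_sum_Ico _ hkm, add_eq_left]
  refine sum_eq_zero fun n hn => ?_
  have hdvd : ε ^ n ∣ ∏ j ∈ Icc (n + 2) (2 * n + 1), (1 - z ^ j) := by
    have := prod_dvd_prod_of_dvd (s := Icc (n + 2) (2 * n + 1)) (fun _ => ε) _
      fun j _ => (hz.trans (by simpa using sub_dvd_pow_sub_pow z 1 j)).neg_right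
    simpa [show 2 * n + 1 + 1 - (n + 2) = n by omega] using this
  obtain ⟨c, hc⟩ := (pow_dvd_pow ε (mem_Ico.mp hn).1).trans hdvd
  rw [hc, hε, zero_mul, mul_zero]

lemma aeval_one_add_tauP_four {ε : S} (hε : ε ^ 4 = 0) :
    aeval (1 + ε) (tauP 4) = 1 - 6 * ε + 45 * ε ^ 2 - 464 * ε ^ 3 := by
  rw [aeval_tauP]
  simp only [sum_range_succ, sum_range_zero, Nat.reduceMul, Nat.reduceAdd, Icc_self,
    prod_singleton, prod_Icc_succ_top, Nat.reduceLeDiff, Icc_eq_empty_of_lt (by norm_num : 1 < 2),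
    prod_empty]
  grind

lemma aeval_tauP_four_of_mul_eq_one {ε z : S} (hε : ε ^ 4 = 0) (hz : (1 + ε) * z = 1) :
    aeval z (tauP 4) = 1 + 6 * ε + 39 * ε ^ 2 + 380 * ε ^ 3 := by
  have hs : z - 1 = -ε * z := by linear_combination hz
  have hs4 : (z - 1) ^ 4 = 0 := by rw [hs, mul_pow, neg_pow, hε]; ring
  rw [← add_sub_cancel 1 z, aeval_one_add_tauP_four hs4]
  grind

lemma one_add_pow_add_twelve {ε : S} (hε : ε ^ 4 = 0) {w : ℕ}
    (h : (1 + ε) ^ w * (1 + 6 * ε + 39 * ε ^ 2 + 380 * ε ^ 3) =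
      1 - 6 * ε + 45 * ε ^ 2 - 464 * ε ^ 3) :
    (1 + ε) ^ (w + 12) = 1 - 480 * ε ^ 3 := by
  have hB : IsUnit (1 + 6 * ε + 39 * ε ^ 2 + 380 * ε ^ 3) := by
    rw [show (1 : S) + 6 * ε + 39 * ε ^ 2 + 380 * ε ^ 3 = 1 + ε * (6 + 39 * ε + 380 * ε ^ 2) by
      ring]
    exact IsNilpotent.isUnit_one_add ((Commute.all _ _).isNilpotent_mul_right ⟨4, hε⟩)
  refine hB.mul_left_cancel ?_
  calc _ = (1 + ε) ^ w * (1 + 6 * ε + 39 * ε ^ 2 + 380 * ε ^ 3) * (1 + ε) ^ 12 := by ring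
    _ = (1 - 6 * ε + 45 * ε ^ 2 - 464 * ε ^ 3) * (1 + ε) ^ 12 := by rw [h]
    -- `grind` stalls on the symbolic power `(1 + ε) ^ w` in `h`.
    _ = _ := by clear h hB; grind

end CommRing

namespace IsPrimitiveRoot

lemma exists_pow_eq_zpow {K : Type*} [Field K] {ζ : K} {k : ℕ} (hζ : IsPrimitiveRoot ζ k)
    (hk : k ≠ 0) (v : ℤ) : ∃ w : ℕ, ζ ^ w = ζ ^ v := by
  have hk' : (k : ℤ) ≠ 0 := by exact_mod_cast hk
  refine ⟨(v % k).toNat, ?_⟩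
  rw [← zpow_natCast, Int.toNat_of_nonneg (Int.emod_nonneg v hk')]
  conv_rhs => rw [← Int.emod_add_mul_ediv v k, zpow_add₀ (hζ.ne_zero hk), zpow_mul]
  rw [zpow_natCast, hζ.pow_eq_one, one_zpow, mul_one]

lemma conj_eq_pow_sub_one {ζ : ℂ} {k : ℕ} (hζ : IsPrimitiveRoot ζ k) (hk : k ≠ 0) :
    starRingEnd ℂ ζ = ζ ^ (k - 1) := by
  rw [← Complex.inv_eq_conj (hζ.norm'_eq_one hk), inv_eq_of_mul_eq_one_left]
  rw [pow_sub_one_mul hk, hζ.pow_eq_one]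

lemma aeval_eq_zero_of_aeval_eq_zero {K : Type*} [Field K] [CharZero K] {ζ : K} {p : ℕ}
    [Fact p.Prime] (hζ : IsPrimitiveRoot ζ p) {S : Type*} [CommRing S] [Algebra (ZMod p) S]
    {z : S} (hz : (z - 1) ^ (p - 1) = 0) {f : ℤ[X]} (hf : aeval ζ f = 0) : aeval z f = 0 := by
  have hp0 := (Fact.out : p.Prime).pos
  obtain ⟨g, rfl⟩ : cyclotomic p ℤ ∣ f := by
    rw [cyclotomic_eq_minpoly hζ hp0]
    exact minpoly.isIntegrallyClosed_dvd (hζ.isIntegral hp0) hf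
  have hcyc : cyclotomic p (ZMod p) = (X - 1) ^ (p - 1) := by
    simpa using
      cyclotomic_mul_prime_pow_eq (ZMod p) (m := 1) (Nat.Prime.not_dvd_one Fact.out) one_pos
  rw [map_mul, ← aeval_map_algebraMap (ZMod p), algebraMap_int_eq, map_cyclotomic, hcyc, map_pow,
    map_sub, aeval_X, map_one, hz, zero_mul]

lemma exists_aeval_sub_mul_comp_eq_zero {ζ : ℂ} {k : ℕ} (hζ : IsPrimitiveRoot ζ k) (hk : k ≠ 0)
    (f : ℤ[X]) {v : ℤ} {y : ℂ} (hy : y ∈ Subring.closure {ζ})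
    (h : aeval ζ f - ζ ^ v * starRingEnd ℂ (aeval ζ f) = k * y) :
    ∃ (w : ℕ) (Y : ℤ[X]), aeval ζ (f - X ^ w * f.comp (X ^ (k - 1)) - (k : ℤ[X]) * Y) = 0 := by
  obtain ⟨w, hw⟩ := hζ.exists_pow_eq_zpow hk v
  obtain ⟨Y, rfl⟩ : ∃ Y : ℤ[X], aeval ζ Y = y := by
    have hy' : y ∈ Algebra.adjoin ℤ {ζ} := by rwa [Algebra.adjoin_int]
    rwa [Algebra.adjoin_singleton_eq_range_aeval] at hy'
  have hconj : starRingEnd ℂ (aeval ζ f) = aeval (ζ ^ (k - 1)) f := by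
    rw [← hζ.conj_eq_pow_sub_one hk]
    exact (aeval_algHom_apply (starRingEnd ℂ).toIntAlgHom ζ f).symm
  refine ⟨w, Y, ?_⟩
  rw [← hw, hconj] at h
  simp only [map_sub, map_mul, map_pow, aeval_X, aeval_comp, map_natCast]
  linear_combination h

end IsPrimitiveRoot

noncomputable abbrev TruncPoly (R : Type*) [CommRing R] (n : ℕ) : Type _ :=
  R[X] ⧸ Ideal.span {(X : R[X]) ^ n}

namespace TruncPoly

variable {R : Type*} [CommRing R] {n : ℕ}

noncomputable def eps : TruncPoly R n := Ideal.Quotient.mk _ X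

lemma eps_pow : (eps : TruncPoly R n) ^ n = 0 := by
  rw [eps, ← map_pow, Ideal.Quotient.eq_zero_iff_mem]
  exact Ideal.mem_span_singleton_self _

lemma coeff_eq_zero_of_mk_eq_zero {f : R[X]} (hf : (Ideal.Quotient.mk _ f : TruncPoly R n) = 0)
    {k : ℕ} (hk : k < n) : f.coeff k = 0 :=
  X_pow_dvd_iff.mp (Ideal.mem_span_singleton.mp (Ideal.Quotient.eq_zero_iff_mem.mp hf)) k hk

variable {p : ℕ} [Fact p.Prime]

lemma one_add_eps_pow_prime (hp : n ≤ p) : (1 + eps : TruncPoly (ZMod p) n) ^ p = 1 := by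
  have hfrob : (1 + X : (ZMod p)[X]) ^ p = 1 + X ^ p := by rw [add_pow_char, one_pow]
  have := congrArg (Ideal.Quotient.mk (Ideal.span {(X : (ZMod p)[X]) ^ n})) hfrob
  simp only [map_pow, map_add, map_one] at this
  rw [eps, this, ← eps, pow_eq_zero_of_le hp eps_pow, add_zero]

lemma natCast_eq_zero_of_one_add_eps_pow_eq (hp : 4 ≤ p) {m c : ℕ}
    (h : (1 + eps : TruncPoly (ZMod p) 4) ^ m = 1 - (c : TruncPoly (ZMod p) 4) * eps ^ 3) :
    (c : ZMod p) = 0 := by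
  have hm : (m : ZMod p) = 0 := by
    have := coeff_eq_zero_of_mk_eq_zero (n := 4) (f := (1 + X) ^ m - (1 - C (c : ZMod p) * X ^ 3))
      (by simpa [eps, sub_eq_zero] using h) (k := 1) (by norm_num)
    simpa [coeff_one_add_X_pow, coeff_X_pow, coeff_C_mul, coeff_one] using this
  obtain ⟨q, rfl⟩ := (ZMod.natCast_eq_zero_iff m p).mp hm
  rw [pow_mul, one_add_eps_pow_prime hp, one_pow, eq_comm, sub_eq_self] at h
  have := coeff_eq_zero_of_mk_eq_zero (n := 4) (f := C (c : ZMod p) * X ^ 3)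
    (by simpa [eps] using h) (k := 3) (by norm_num)
  simpa using this

end TruncPoly

open TruncPoly in
lemma dvd_480_of_aeval_eq_zero {K : Type*} [Field K] [CharZero K] {ζ : K} {p : ℕ} [Fact p.Prime]
    (hζ : IsPrimitiveRoot ζ p) (hp : 5 ≤ p) {w : ℕ} {Y : ℤ[X]}
    (hQ : aeval ζ (tauP (p - 1) - X ^ w * (tauP (p - 1)).comp (X ^ (p - 1)) - (p : ℤ[X]) * Y) = 0) :
    p ∣ 480 := by
  set ε : TruncPoly (ZMod p) 4 := eps
  have hε : ε ^ 4 = 0 := eps_pow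
  have hinv : (1 + ε) * (1 + ε) ^ (p - 1) = 1 := by
    rw [← pow_succ', Nat.sub_add_cancel (by omega), one_add_eps_pow_prime (by omega)]
  have hp0 : (p : TruncPoly (ZMod p) 4) = 0 := by
    rw [← map_natCast (algebraMap (ZMod p) _), ZMod.natCast_self, map_zero]
  have h := hζ.aeval_eq_zero_of_aeval_eq_zero (z := 1 + ε)
    (by rw [add_sub_cancel_left, pow_eq_zero_of_le (by omega) hε]) hQ
  simp only [map_sub, map_mul, map_pow, aeval_X, aeval_comp, map_natCast, hp0, zero_mul,
    sub_zero] at h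
  rw [aeval_tauP_eq_of_dvd_sub_one hε (by simp) (by omega : 4 ≤ p - 1),
    aeval_tauP_eq_of_dvd_sub_one hε (by simpa using sub_dvd_pow_sub_pow (1 + ε) 1 (p - 1))
      (by omega : 4 ≤ p - 1), aeval_one_add_tauP_four hε, aeval_tauP_four_of_mul_eq_one hε hinv] at h
  have h480 : ((480 : ℕ) : ZMod p) = 0 := natCast_eq_zero_of_one_add_eps_pow_eq (by omega)
    (by simpa using one_add_pow_add_twelve hε (by linear_combination -h))
  exact (ZMod.natCast_eq_zero_iff _ _).mp h480

/-- The Poincaré sphere criterion: for a prime `r ≥ 7` and a primitive `r`-th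
root of unity `ζ`, the quantum invariant `τ_P` of the Poincaré sphere never
satisfies the congruence `τ_P ≡ ζ^v · conj(τ_P) (mod r)` in `ℤ[ζ]`. -/
theorem poincare_sphere_not_r_periodic
    (r : ℕ) (hr : r.Prime) (hr7 : 7 ≤ r) (ζ : ℂ) (hζ : IsPrimitiveRoot ζ r) :
    ∀ v : ℤ, ¬ ∃ y ∈ Subring.closure ({ζ} : Set ℂ),
      (∑ n ∈ Finset.range (r - 1), ζ ^ n * (∑ k ∈ Finset.range (n + 1), ζ ^ k) *
          ∏ j ∈ Finset.Icc (n + 2) (2 * n + 1), (1 - ζ ^ j))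
        - ζ ^ v * (starRingEnd ℂ)
            (∑ n ∈ Finset.range (r - 1), ζ ^ n * (∑ k ∈ Finset.range (n + 1), ζ ^ k) *
              ∏ j ∈ Finset.Icc (n + 2) (2 * n + 1), (1 - ζ ^ j))
        = (r : ℂ) * y := by
  rintro v ⟨y, hy, hτ⟩
  have := Fact.mk hr
  rw [← aeval_tauP] at hτ
  obtain ⟨w, Y, hQ⟩ := hζ.exists_aeval_sub_mul_comp_eq_zero hr.ne_zero _ hy hτ
  have hmem := Nat.mem_primeFactors.mpr ⟨hr, dvd_480_of_aeval_eq_zero hζ (by omega) hQ, by norm_num⟩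
  have hsmall : r = 2 ∨ r = 3 ∨ r = 5 := by
    simpa [Nat.primeFactors, Nat.primeFactorsList_ofNat] using hmem
  omega
end

section
/- Let r be a prime with r ≥ 5 and r ≠ 7, and let ζ ∈ ℂ be a primitive r-th root of unity. Define τ_B = Σ_{n=0}^{r−2} ζ^{−n(n+2)} · (1 + ζ + ⋯ + ζ^n) · Π_{j=n+2}^{2n+1} (1 − ζ^j), an element of ℤ[ζ]. Then for every integer v there is no y ∈ ℤ[ζ] with τ_B − ζ^v·conj(τ_B) = r·y, where conj denotes complex conjugation. -/
/-!
Write `λ = 1 - ζ`. Since `(r) = (λ)^(r-1)` and `r - 1 ≥ 4`, a congruence modulo `r` in `ℤ[ζ]`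
survives in `𝔽_r[ε]/(ε^4)` under `ζ ↦ 1 - ε`. There `τ_B = 1 + 6ε + 69ε² + 1064ε³`, while
`ζ^w · conj τ_B = (1 - ε)^w (1 - 6ε + 63ε² - 932ε³)`. Comparing the coefficients of `ε` and
`ε³` gives `w ≡ -12` and then `8064 = 2^7 · 3^2 · 7 ≡ 0 (mod r)`.
-/

open Finset Polynomial

/-- `τ_B` as a polynomial in `a = ζ` and `b = ζ⁻¹`: the theorem's `τ_B` is
`brieskornTau (r - 1) ζ ζ⁻¹`. -/
def brieskornTau {R : Type*} [CommRing R] (N : ℕ) (a b : R) : R :=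
  ∑ n ∈ range N, b ^ (n * (n + 2)) * (∑ k ∈ range (n + 1), a ^ k) *
    ∏ j ∈ Icc (n + 2) (2 * n + 1), (1 - a ^ j)

theorem map_brieskornTau {R S F : Type*} [CommRing R] [CommRing S] [FunLike F R S]
    [RingHomClass F R S] (f : F) (N : ℕ) (a b : R) :
    f (brieskornTau N a b) = brieskornTau N (f a) (f b) := by
  simp [brieskornTau, map_sum, map_prod]

theorem sum_zpow_eq_brieskornTau {K : Type*} [Field K] (ζ : K) (N : ℕ) :
    ∑ n ∈ range N, ζ ^ (-((n : ℤ) * ((n : ℤ) + 2))) * (∑ k ∈ range (n + 1), ζ ^ k) *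
      ∏ j ∈ Icc (n + 2) (2 * n + 1), (1 - ζ ^ j) = brieskornTau N ζ ζ⁻¹ := by
  refine sum_congr rfl fun n _ => ?_
  rw [show -((n : ℤ) * ((n : ℤ) + 2)) = -((n * (n + 2) : ℕ) : ℤ) by push_cast; ring,
    zpow_neg, zpow_natCast, inv_pow]

section Nilpotent

variable {R : Type*} [CommRing R]

theorem eq_geom_of_mul_eq_one {a b : R} (hab : a * b = 1) (ha : (1 - a) ^ 4 = 0) :
    b = 1 + (1 - a) + (1 - a) ^ 2 + (1 - a) ^ 3 := by
  linear_combination (1 + (1 - a) + (1 - a) ^ 2 + (1 - a) ^ 3) * hab + b * ha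

theorem brieskornTau_eq_brieskornTau_four {a : R} (ha : (1 - a) ^ 4 = 0) (b : R) {N : ℕ}
    (hN : 4 ≤ N) : brieskornTau N a b = brieskornTau 4 a b := by
  rw [brieskornTau, ← sum_range_add_sum_Ico _ hN, brieskornTau, add_eq_left]
  refine sum_eq_zero fun n hn => ?_
  have hdvd : (1 - a) ^ n ∣ ∏ j ∈ Icc (n + 2) (2 * n + 1), (1 - a ^ j) := by
    simpa [Nat.card_Icc, show 2 * n + 1 + 1 - (n + 2) = n by omega] using
      prod_dvd_prod_of_dvd (s := Icc (n + 2) (2 * n + 1)) (fun _ => 1 - a) _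
        fun j _ => one_sub_dvd_one_sub_pow a j
  rw [pow_eq_zero_of_le (mem_Ico.mp hn).1 ha, zero_dvd_iff] at hdvd
  rw [hdvd, mul_zero]

theorem brieskornTau_four_one_sub {ε : R} (hε : ε ^ 4 = 0) :
    brieskornTau 4 (1 - ε) (1 + ε + ε ^ 2 + ε ^ 3) =
      1 + 6 * ε + 69 * ε ^ 2 + 1064 * ε ^ 3 := by
  simp only [brieskornTau, sum_range_succ, range_one, sum_singleton, zero_add, zero_mul, pow_zero,
    range_zero, sum_empty, mul_one, mul_zero, Order.lt_two_iff, Std.le_refl, Icc_eq_empty_of_lt,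
    prod_empty, Nat.reduceAdd, one_mul, pow_one, Icc_self, prod_singleton, Nat.reduceMul,
    Nat.reduceLeDiff, prod_Icc_succ_top]
  ring_nf
  simp [fun k (hk : 4 ≤ k) => pow_eq_zero_of_le hk hε]

theorem brieskornTau_of_mul_eq_one {a b : R} (hab : a * b = 1) (ha : (1 - a) ^ 4 = 0) {N : ℕ}
    (hN : 4 ≤ N) :
    brieskornTau N a b = 1 + 6 * (1 - a) + 69 * (1 - a) ^ 2 + 1064 * (1 - a) ^ 3 := by
  rw [brieskornTau_eq_brieskornTau_four ha b hN, eq_geom_of_mul_eq_one hab ha,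
    ← brieskornTau_four_one_sub ha, sub_sub_cancel]

theorem one_sub_pow_of_pow_four_eq_zero {ε : R} (hε : ε ^ 4 = 0) (w : ℕ) :
    (1 - ε) ^ w = 1 - w * ε + w.choose 2 * ε ^ 2 - w.choose 3 * ε ^ 3 := by
  induction w with
  | zero => simp
  | succ w ih =>
    rw [pow_succ, ih, Nat.choose_succ_succ, Nat.choose_succ_succ, Nat.choose_one_right]
    push_cast
    linear_combination (w.choose 3 : R) * hε

theorem brieskornTau_sub_pow_mul_brieskornTau {ε b : R} (hε : ε ^ 4 = 0)
    (hb : (1 - ε) * b = 1) {N : ℕ} (hN : 4 ≤ N) (w : ℕ) :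
    brieskornTau N (1 - ε) b - (1 - ε) ^ w * brieskornTau N b (1 - ε) =
      (12 + w) * ε + (6 - 6 * w - w.choose 2) * ε ^ 2 +
        (1996 + 63 * w + 6 * w.choose 2 + w.choose 3) * ε ^ 3 := by
  have hb' : b = 1 + ε + ε ^ 2 + ε ^ 3 := by simpa using eq_geom_of_mul_eq_one hb (by simpa)
  have hδ : (1 - b) ^ 4 = 0 := by
    rw [hb']
    linear_combination (1 + ε + ε ^ 2) ^ 4 * hε
  rw [brieskornTau_of_mul_eq_one hb (by simpa) hN,
    brieskornTau_of_mul_eq_one (by rw [mul_comm, hb]) hδ hN,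
    one_sub_pow_of_pow_four_eq_zero hε, hb']
  ring_nf
  simp [fun k (hk : 4 ≤ k) => pow_eq_zero_of_le hk hε]

end Nilpotent

theorem exists_aeval_eq_of_mem_closure_singleton {A : Type*} [CommRing A] {x y : A}
    (hy : y ∈ Subring.closure {x}) : ∃ p : ℤ[X], aeval x p = y := by
  have hy' : y ∈ Algebra.adjoin ℤ {x} := by rwa [Algebra.adjoin_int]
  rwa [Algebra.adjoin_singleton_eq_range_aeval] at hy'

/-- Modulo `p`, `Φ_p = (X - 1)^(p - 1)`, so `ζ ↦ u` respects every relation of `ℤ[ζ]`. -/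
theorem aeval_eq_zero_of_aeval_primitiveRoot_eq_zero {K : Type*} [Field K] [CharZero K] {p : ℕ}
    [hp : Fact p.Prime] {ζ : K} (hζ : IsPrimitiveRoot ζ p) {S : Type*} [CommRing S]
    [Algebra (ZMod p) S] {u : S} (hu : (u - 1) ^ (p - 1) = 0) {f : ℤ[X]} (hf : aeval ζ f = 0) :
    aeval u f = 0 := by
  obtain ⟨g, rfl⟩ : cyclotomic p ℤ ∣ f := by
    rw [cyclotomic_eq_minpoly hζ hp.out.pos]
    exact minpoly.isIntegrallyClosed_dvd (hζ.isIntegral hp.out.pos) hf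
  have hcyc : cyclotomic p (ZMod p) = (X - 1) ^ (p - 1) := by
    simpa using cyclotomic_mul_prime_pow_eq (ZMod p) (m := 1) (p := p)
      (by simpa using hp.out.one_lt.ne') one_pos
  rw [map_mul, ← aeval_map_algebraMap (ZMod p), map_cyclotomic, hcyc]
  simp [hu]

abbrev TruncatedPolynomial (k : Type*) [CommRing k] (n : ℕ) : Type _ :=
  k[X] ⧸ Ideal.span {(X : k[X]) ^ n}

namespace TruncatedPolynomial

variable {k : Type*} [CommRing k]

noncomputable def eps {n : ℕ} : TruncatedPolynomial k n := Ideal.Quotient.mk _ X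

theorem eps_pow {n : ℕ} : (eps : TruncatedPolynomial k n) ^ n = 0 := by
  rw [eps, ← map_pow, Ideal.Quotient.eq_zero_iff_mem]
  exact Ideal.subset_span rfl

theorem eq_zero_of_algebraMap_mul_eps_add_eq_zero {c₁ c₂ c₃ : k}
    (h : algebraMap k (TruncatedPolynomial k 4) c₁ * eps + algebraMap k _ c₂ * eps ^ 2 +
      algebraMap k _ c₃ * eps ^ 3 = 0) : c₁ = 0 ∧ c₂ = 0 ∧ c₃ = 0 := by
  have hdvd : (X : k[X]) ^ 4 ∣ C c₁ * X + C c₂ * X ^ 2 + C c₃ * X ^ 3 := by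
    rw [← Ideal.mem_span_singleton, ← Ideal.Quotient.eq_zero_iff_mem, ← h]
    simp [eps, ← Ideal.Quotient.mk_algebraMap]
  have hcoeff := X_pow_dvd_iff.mp hdvd
  refine ⟨?_, ?_, ?_⟩
  · simpa [coeff_X] using hcoeff 1 (by norm_num)
  · simpa [coeff_X] using hcoeff 2 (by norm_num)
  · simpa [coeff_X] using hcoeff 3 (by norm_num)

end TruncatedPolynomial

theorem two_mul_cast_choose_two {R : Type*} [CommRing R] (w : ℕ) :
    2 * (w.choose 2 : R) = w * (w - 1) := by
  rw [← Nat.cast_descFactorial_two, Nat.descFactorial_eq_factorial_mul_choose]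
  push_cast [Nat.factorial]
  ring

theorem six_mul_cast_choose_three {R : Type*} [CommRing R] (w : ℕ) :
    6 * (w.choose 3 : R) = w * (w - 1) * (w - 2) := by
  induction w with
  | zero => simp
  | succ w ih =>
    rw [Nat.choose_succ_succ, Nat.cast_add, mul_add, ih]
    push_cast
    linear_combination 3 * two_mul_cast_choose_two (R := R) w

theorem eq_8064_zero {R : Type*} [CommRing R] {w : ℕ} (h₁ : (12 + w : R) = 0)
    (h₃ : (1996 + 63 * w + 6 * w.choose 2 + w.choose 3 : R) = 0) : (8064 : R) = 0 := by
  linear_combination 6 * h₃ - (w ^ 2 + 3 * w + 326 : R) * h₁ -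
    18 * two_mul_cast_choose_two (R := R) w - six_mul_cast_choose_three (R := R) w

theorem Nat.Prime.eq_two_or_eq_three_or_eq_seven_of_dvd_8064 {p : ℕ} (hp : p.Prime)
    (h : p ∣ 8064) : p = 2 ∨ p = 3 ∨ p = 7 := by
  have hdvd : ∀ q, q.Prime → p ∣ q → p = q := fun q hq =>
    (Nat.prime_dvd_prime_iff_eq hp hq).mp
  rw [show 8064 = 2 ^ 7 * 3 ^ 2 * 7 by norm_num] at h
  rcases hp.dvd_mul.mp h with h | h
  · rcases hp.dvd_mul.mp h with h | h
    · exact .inl (hdvd 2 Nat.prime_two (hp.dvd_of_dvd_pow h))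
    · exact .inr (.inl (hdvd 3 Nat.prime_three (hp.dvd_of_dvd_pow h)))
  · exact .inr (.inr (hdvd 7 (by norm_num) h))

theorem IsPrimitiveRoot.zpow_eq_pow_toNat_emod {K : Type*} [Field K] {ζ : K} {r : ℕ}
    (hζ : IsPrimitiveRoot ζ r) (hr : r ≠ 0) (v : ℤ) : ζ ^ v = ζ ^ (v % r).toNat := by
  calc ζ ^ v = ζ ^ (v % r + r * (v / r)) := by rw [Int.emod_add_mul_ediv]
    _ = ζ ^ (v % r) := by
      rw [zpow_add₀ (hζ.ne_zero hr), zpow_mul, hζ.zpow_eq_one, one_zpow, mul_one]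
    _ = ζ ^ (v % r).toNat := by
      rw [← zpow_natCast, Int.toNat_of_nonneg (Int.emod_nonneg _ (by exact_mod_cast hr))]

theorem brieskornTau_relation_coeffs_eq_zero {K : Type*} [Field K] [CharZero K] {r : ℕ}
    (hr : r.Prime) (hr5 : 5 ≤ r) {ζ : K} (hζ : IsPrimitiveRoot ζ r) {w : ℕ} {Y : ℤ[X]}
    (h : aeval ζ (brieskornTau (r - 1) X (X ^ (r - 1)) -
      X ^ w * brieskornTau (r - 1) (X ^ (r - 1)) X - (r : ℤ[X]) * Y) = 0) :
    (12 + w : ZMod r) = 0 ∧ (1996 + 63 * w + 6 * w.choose 2 + w.choose 3 : ZMod r) = 0 := by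
  have := Fact.mk hr
  set ε : TruncatedPolynomial (ZMod r) 4 := TruncatedPolynomial.eps
  have hu : (1 - ε - 1) ^ (r - 1) = 0 := by
    refine pow_eq_zero_of_le (by omega : 4 ≤ r - 1) ?_
    linear_combination (TruncatedPolynomial.eps_pow : ε ^ 4 = 0)
  have hunit : (1 - ε) * (1 - ε) ^ (r - 1) = 1 := by
    have := aeval_eq_zero_of_aeval_primitiveRoot_eq_zero hζ hu (f := X ^ r - 1)
      (by simp [hζ.pow_eq_one])
    rw [← pow_succ', Nat.sub_add_cancel hr.one_lt.le]
    simpa [sub_eq_zero] using this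
  have hr0 : (r : TruncatedPolynomial (ZMod r) 4) = 0 := by
    rw [← map_natCast (algebraMap (ZMod r) _), ZMod.natCast_self, map_zero]
  have hred := aeval_eq_zero_of_aeval_primitiveRoot_eq_zero hζ hu h
  simp only [map_sub, map_mul, map_brieskornTau, aeval_X, map_pow, map_natCast, hr0, zero_mul,
    sub_zero] at hred
  rw [brieskornTau_sub_pow_mul_brieskornTau TruncatedPolynomial.eps_pow hunit (by omega)] at hred
  obtain ⟨h₁, -, h₃⟩ := TruncatedPolynomial.eq_zero_of_algebraMap_mul_eps_add_eq_zero
    (k := ZMod r) (c₁ := 12 + w) (c₂ := 6 - 6 * w - w.choose 2)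
    (c₃ := 1996 + 63 * w + 6 * w.choose 2 + w.choose 3)
    (by simpa [map_ofNat] using hred)
  exact ⟨h₁, h₃⟩

/-- The Brieskorn sphere `Σ(2,3,7)` criterion: for a prime `r ≥ 5`, `r ≠ 7` and
a primitive `r`-th root of unity `ζ`, the quantum invariant `τ_B` never
satisfies the congruence `τ_B ≡ ζ^v · conj(τ_B) (mod r)` in `ℤ[ζ]`. -/
theorem brieskorn_sphere_not_r_periodic
    (r : ℕ) (hr : r.Prime) (hr5 : 5 ≤ r) (hr7 : r ≠ 7)
    (ζ : ℂ) (hζ : IsPrimitiveRoot ζ r) :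
    ∀ v : ℤ, ¬ ∃ y ∈ Subring.closure ({ζ} : Set ℂ),
      (∑ n ∈ Finset.range (r - 1), ζ ^ (-((n : ℤ) * ((n : ℤ) + 2))) *
          (∑ k ∈ Finset.range (n + 1), ζ ^ k) *
          ∏ j ∈ Finset.Icc (n + 2) (2 * n + 1), (1 - ζ ^ j))
        - ζ ^ v * (starRingEnd ℂ)
            (∑ n ∈ Finset.range (r - 1), ζ ^ (-((n : ℤ) * ((n : ℤ) + 2))) *
              (∑ k ∈ Finset.range (n + 1), ζ ^ k) *
              ∏ j ∈ Finset.Icc (n + 2) (2 * n + 1), (1 - ζ ^ j))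
        = (r : ℂ) * y := by
  rintro v ⟨y, hy, hτ⟩
  obtain ⟨Y, rfl⟩ := exists_aeval_eq_of_mem_closure_singleton hy
  have hinv : ζ⁻¹ = ζ ^ (r - 1) := by
    rw [eq_comm, ← mul_eq_one_iff_eq_inv₀ (hζ.ne_zero hr.ne_zero), ← pow_succ,
      Nat.sub_add_cancel hr.one_lt.le, hζ.pow_eq_one]
  have hconj : starRingEnd ℂ ζ = ζ⁻¹ :=
    (Complex.inv_eq_conj (hζ.norm'_eq_one hr.ne_zero)).symm
  obtain ⟨w, hw⟩ : ∃ w : ℕ, ζ ^ v = ζ ^ w := ⟨_, hζ.zpow_eq_pow_toNat_emod hr.ne_zero v⟩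
  rw [sum_zpow_eq_brieskornTau, map_brieskornTau, hconj, map_inv₀, hconj, inv_inv, hw,
    hinv] at hτ
  obtain ⟨h₁, h₃⟩ := brieskornTau_relation_coeffs_eq_zero hr hr5 hζ (w := w) (Y := Y)
    (by simpa [map_brieskornTau, sub_eq_zero] using hτ)
  have hdvd : r ∣ 8064 :=
    (CharP.cast_eq_zero_iff (ZMod r) r 8064).mp (by exact_mod_cast eq_8064_zero h₁ h₃)
  rcases hr.eq_two_or_eq_three_or_eq_seven_of_dvd_8064 hdvd with h | h | h <;> omega
end

section
/- Let r ≥ 7 be a prime and ζ ∈ ℂ a primitive r-th root of unity, and let τ_P = Σ_{n=0}^{r−2} ζ^n · (1 + ζ + ⋯ + ζ^n) · Π_{j=n+2}^{2n+1} (1 − ζ^j) ∈ ℤ[ζ]. Then there exist integers c_0, c_2 and an element y ∈ ℤ[ζ] such that τ_P = c_0 + 6·(1−ζ) + c_2·(1−ζ)² + 464·(1−ζ)³ + (1−ζ)⁴·y. (That is, in the (1−ζ)-adic expansion of τ_P the coefficients satisfy a_1(τ_P) ≡ 6 and a_3(τ_P) ≡ 464 modulo r.) -/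
/-!
Each factor `1 - ζ ^ j` is divisible by `1 - ζ`, so the `n`-th summand of `τ_P` is divisible by
`(1 - ζ) ^ n`, already inside `ℤ[ζ]`. Hence only the summands with `n < 4` contribute to the
coefficients `a₀, …, a₃`, and for these the expansion is an explicit polynomial identity, valid
in every commutative ring.
-/

open Finset

section PoincareSeries

variable {A : Type*} [CommRing A] (ζ : A)

def poincareTerm (n : ℕ) : A :=
  ζ ^ n * (∑ k ∈ range (n + 1), ζ ^ k) * ∏ j ∈ Icc (n + 2) (2 * n + 1), (1 - ζ ^ j)

theorem one_sub_pow_card_dvd_prod (s : Finset ℕ) : (1 - ζ) ^ #s ∣ ∏ j ∈ s, (1 - ζ ^ j) := by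
  rw [← prod_const]
  exact prod_dvd_prod_of_dvd _ _ fun j _ => one_sub_dvd_one_sub_pow ζ j

theorem one_sub_pow_dvd_poincareTerm (n : ℕ) : (1 - ζ) ^ n ∣ poincareTerm ζ n := by
  have hcard : #(Icc (n + 2) (2 * n + 1)) = n := by simp only [Nat.card_Icc]; omega
  have := one_sub_pow_card_dvd_prod ζ (Icc (n + 2) (2 * n + 1))
  rw [hcard] at this
  exact this.mul_left _

theorem one_sub_pow_four_dvd_sum_Ico (N : ℕ) :
    (1 - ζ) ^ 4 ∣ ∑ n ∈ Ico 4 N, poincareTerm ζ n :=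
  dvd_sum fun n hn =>
    (pow_dvd_pow _ (mem_Ico.1 hn).1).trans (one_sub_pow_dvd_poincareTerm ζ n)

-- The quotient of the degree-24 polynomial `∑_{n<4} poincareTerm X n`, minus its cubic Taylor
-- polynomial at `X = 1`, by `(1 - X) ^ 4`.
def poincareHeadQuotient : A :=
  -(515 + 571 * ζ + 629 * ζ ^ 2 + 684 * ζ ^ 3 + 730 * ζ ^ 4 + 761 * ζ ^ 5
    + 771 * ζ ^ 6 + 756 * ζ ^ 7 + 715 * ζ ^ 8 + 650 * ζ ^ 9 + 566 * ζ ^ 10 + 470 * ζ ^ 11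
    + 370 * ζ ^ 12 + 274 * ζ ^ 13 + 189 * ζ ^ 14 + 120 * ζ ^ 15 + 69 * ζ ^ 16
    + 35 * ζ ^ 17 + 15 * ζ ^ 18 + 5 * ζ ^ 19 + ζ ^ 20)

theorem sum_range_four_poincareTerm :
    ∑ n ∈ range 4, poincareTerm ζ n
      = 1 + 6 * (1 - ζ) + 45 * (1 - ζ) ^ 2 + 464 * (1 - ζ) ^ 3
        + (1 - ζ) ^ 4 * poincareHeadQuotient ζ := by
  have h0 : Icc 2 1 = ∅ := by decide
  have h1 : Icc 3 3 = {3} := by decide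
  have h2 : Icc 4 5 = {4, 5} := by decide
  have h3 : Icc 5 7 = {5, 6, 7} := by decide
  simp only [poincareTerm, poincareHeadQuotient, sum_range_succ, sum_range_zero, Nat.reduceMul,
    Nat.reduceAdd, h0, h1, h2, h3, prod_empty, prod_singleton]
  norm_num
  ring

theorem exists_sum_range_poincareTerm_eq {N : ℕ} (hN : 4 ≤ N) :
    ∃ y : A, ∑ n ∈ range N, poincareTerm ζ n
      = 1 + 6 * (1 - ζ) + 45 * (1 - ζ) ^ 2 + 464 * (1 - ζ) ^ 3 + (1 - ζ) ^ 4 * y := by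
  obtain ⟨y, hy⟩ := one_sub_pow_four_dvd_sum_Ico ζ N
  rw [← sum_range_add_sum_Ico _ hN, sum_range_four_poincareTerm, hy]
  exact ⟨poincareHeadQuotient ζ + y, by ring⟩

end PoincareSeries

theorem poincare_tau_adic_coeffs_general
    (r : ℕ) (hr7 : 7 ≤ r) (ζ : ℂ) :
    ∃ c₀ c₂ : ℤ, ∃ y ∈ Subring.closure ({ζ} : Set ℂ),
      (∑ n ∈ Finset.range (r - 1), ζ ^ n * (∑ k ∈ Finset.range (n + 1), ζ ^ k) *
          ∏ j ∈ Finset.Icc (n + 2) (2 * n + 1), (1 - ζ ^ j))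
        = (c₀ : ℂ) + 6 * (1 - ζ) + (c₂ : ℂ) * (1 - ζ) ^ 2 + 464 * (1 - ζ) ^ 3
          + (1 - ζ) ^ 4 * y := by
  let ζ' : Subring.closure ({ζ} : Set ℂ) := ⟨ζ, Subring.subset_closure rfl⟩
  obtain ⟨y, hy⟩ := exists_sum_range_poincareTerm_eq ζ' (N := r - 1) (by omega)
  refine ⟨1, 45, y, y.2, ?_⟩
  have hyℂ := congrArg (Subring.closure ({ζ} : Set ℂ)).subtype hy
  simp only [poincareTerm, map_add, map_sub, map_mul, map_sum, map_prod, map_pow, map_one,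
    map_ofNat] at hyℂ
  simpa using hyℂ

/-- The `(1-ζ)`-adic expansion of the quantum invariant `τ_P` of the Poincaré
sphere has `a₁(τ_P) ≡ 6` and `a₃(τ_P) ≡ 464` modulo `r`. -/
theorem poincare_tau_adic_coeffs
    (r : ℕ) (hr : r.Prime) (hr7 : 7 ≤ r) (ζ : ℂ) (hζ : IsPrimitiveRoot ζ r) :
    ∃ c₀ c₂ : ℤ, ∃ y ∈ Subring.closure ({ζ} : Set ℂ),
      (∑ n ∈ Finset.range (r - 1), ζ ^ n * (∑ k ∈ Finset.range (n + 1), ζ ^ k) *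
          ∏ j ∈ Finset.Icc (n + 2) (2 * n + 1), (1 - ζ ^ j))
        = (c₀ : ℂ) + 6 * (1 - ζ) + (c₂ : ℂ) * (1 - ζ) ^ 2 + 464 * (1 - ζ) ^ 3
          + (1 - ζ) ^ 4 * y :=
  poincare_tau_adic_coeffs_general r hr7 ζ
end

section
/- Let r be a prime with r ≥ 7, and let ζ ∈ ℂ be a primitive r-th root of unity, and let τ_B = Σ_{n=0}^{r−2} ζ^{−n(n+2)} · (1 + ζ + ⋯ + ζ^n) · Π_{j=n+2}^{2n+1} (1 − ζ^j) ∈ ℤ[ζ]. Then there exist integers c_0, c_2 and an element y ∈ ℤ[ζ] such that τ_B = c_0 + 6·(1−ζ) + c_2·(1−ζ)² + 1064·(1−ζ)³ + (1−ζ)⁴·y. (That is, in the (1−ζ)-adic expansion of τ_B the coefficients satisfy a_1(τ_B) ≡ 6 and a_3(τ_B) ≡ 1064 modulo r.) -/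
/-- The `(1-ζ)`-adic expansion of the quantum invariant `τ_B` of the Brieskorn
sphere `Σ(2,3,7)` has `a₁(τ_B) ≡ 6` and `a₃(τ_B) ≡ 1064` modulo `r`. -/
theorem brieskorn_tau_adic_coeffs
    (r : ℕ) (hr : r.Prime) (hr7 : 7 ≤ r) (ζ : ℂ) (hζ : IsPrimitiveRoot ζ r) :
    ∃ c₀ c₂ : ℤ, ∃ y ∈ Subring.closure ({ζ} : Set ℂ),
      (∑ n ∈ Finset.range (r - 1), ζ ^ (-((n : ℤ) * ((n : ℤ) + 2))) *
          (∑ k ∈ Finset.range (n + 1), ζ ^ k) *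
          ∏ j ∈ Finset.Icc (n + 2) (2 * n + 1), (1 - ζ ^ j))
        = (c₀ : ℂ) + 6 * (1 - ζ) + (c₂ : ℂ) * (1 - ζ) ^ 2 + 1064 * (1 - ζ) ^ 3
          + (1 - ζ) ^ 4 * y := by
  have hζ0 : ζ ≠ 0 := hζ.ne_zero (by omega)
  have hζr : ζ ^ r = 1 := hζ.pow_eq_one
  have hinv : ζ⁻¹ = ζ ^ (r - 1) := by
    refine inv_eq_of_mul_eq_one_right ?_
    rw [← pow_succ', show r - 1 + 1 = r by omega]
    exact hζr
  set C := Subring.closure ({ζ} : Set ℂ) with hCdef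
  have hC : ζ ∈ C := Subring.subset_closure rfl
  have hCinv : ζ⁻¹ ∈ C := by rw [hinv]; exact pow_mem hC _
  have hzpow : ∀ n : ℕ, ζ ^ (-((n : ℤ) * ((n : ℤ) + 2))) = ζ⁻¹ ^ (n * (n + 2)) := by
    intro n
    rw [show -((n : ℤ) * ((n : ℤ) + 2)) = -((n * (n + 2) : ℕ) : ℤ) by push_cast; ring,
      zpow_neg, zpow_natCast, inv_pow]
  have hgeom : ∀ j : ℕ, 1 - ζ ^ j = (1 - ζ) * ∑ k ∈ Finset.range j, ζ ^ k := by
    intro j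
    linear_combination geom_sum_mul ζ j
  have hprod : ∀ n : ℕ, (∏ j ∈ Finset.Icc (n + 2) (2 * n + 1), (1 - ζ ^ j))
      = (1 - ζ) ^ n * ∏ j ∈ Finset.Icc (n + 2) (2 * n + 1),
          ∑ k ∈ Finset.range j, ζ ^ k := by
    intro n
    rw [Finset.prod_congr rfl fun j _ => hgeom j, Finset.prod_mul_distrib,
      Finset.prod_const, Nat.card_Icc]
    congr 2
    omega
  set Pζ : ℂ := 1 + 5 * ζ ^ 1 + 15 * ζ ^ 2 + 35 * ζ ^ 3 + 69 * ζ ^ 4 + 120 * ζ ^ 5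
      + 189 * ζ ^ 6 + 275 * ζ ^ 7 + 375 * ζ ^ 8 + 485 * ζ ^ 9 + 600 * ζ ^ 10
      + 715 * ζ ^ 11 + 826 * ζ ^ 12 + 931 * ζ ^ 13 + 1030 * ζ ^ 14
      - 15 * ζ ^ 15 - 5 * ζ ^ 16 - ζ ^ 17 with hPdef
  set yh : ℂ := ζ⁻¹ ^ 15 * Pζ with hyhdef
  set yt : ℂ := ∑ n ∈ Finset.Ico 4 (r - 1),
      (1 - ζ) ^ (n - 4) * ζ⁻¹ ^ (n * (n + 2)) * (∑ k ∈ Finset.range (n + 1), ζ ^ k) *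
        ∏ j ∈ Finset.Icc (n + 2) (2 * n + 1), ∑ k ∈ Finset.range j, ζ ^ k with hytdef
  have hyhC : yh ∈ C := by
    refine mul_mem (pow_mem hCinv _) ?_
    rw [hPdef]
    set_option maxRecDepth 8000 in
    repeat
      first
      | apply add_mem
      | apply sub_mem
      | apply mul_mem
      | apply pow_mem
      | exact hC
      | exact one_mem _
      | exact ofNat_mem _ _
  have hytC : yt ∈ C := by
    rw [hytdef]
    refine Subring.sum_mem _ fun n _ => ?_
    exact mul_mem (mul_mem (mul_mem (pow_mem (sub_mem (one_mem _) hC) _)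
      (pow_mem hCinv _)) (Subring.sum_mem _ fun k _ => pow_mem hC _))
      (Subring.prod_mem _ fun j _ => Subring.sum_mem _ fun k _ => pow_mem hC _)
  refine ⟨1, 69, yh + yt, add_mem hyhC hytC, ?_⟩
  have hsplit := (Finset.sum_range_add_sum_Ico
    (fun n => ζ ^ (-((n : ℤ) * ((n : ℤ) + 2))) *
          (∑ k ∈ Finset.range (n + 1), ζ ^ k) *
          ∏ j ∈ Finset.Icc (n + 2) (2 * n + 1), (1 - ζ ^ j))
    (show 4 ≤ r - 1 by omega)).symm
  have htail : (∑ n ∈ Finset.Ico 4 (r - 1), ζ ^ (-((n : ℤ) * ((n : ℤ) + 2))) *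
          (∑ k ∈ Finset.range (n + 1), ζ ^ k) *
          ∏ j ∈ Finset.Icc (n + 2) (2 * n + 1), (1 - ζ ^ j))
      = (1 - ζ) ^ 4 * yt := by
    rw [hytdef, Finset.mul_sum]
    refine Finset.sum_congr rfl fun n hn => ?_
    have hn4 : 4 ≤ n := (Finset.mem_Ico.mp hn).1
    rw [hzpow n, hprod n,
      show (1 - ζ) ^ n = (1 - ζ) ^ 4 * (1 - ζ) ^ (n - 4) by
        rw [← pow_add]; congr 1; omega]
    ring
  have hhead : (∑ n ∈ Finset.range 4, ζ ^ (-((n : ℤ) * ((n : ℤ) + 2))) *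
          (∑ k ∈ Finset.range (n + 1), ζ ^ k) *
          ∏ j ∈ Finset.Icc (n + 2) (2 * n + 1), (1 - ζ ^ j))
      = 1 + 6 * (1 - ζ) + 69 * (1 - ζ) ^ 2 + 1064 * (1 - ζ) ^ 3
        + (1 - ζ) ^ 4 * yh := by
    have e1 : Finset.Icc 2 1 = (∅ : Finset ℕ) := rfl
    have e2 : Finset.Icc 3 3 = ({3} : Finset ℕ) := rfl
    have e3 : Finset.Icc 4 5 = ({4, 5} : Finset ℕ) := rfl
    have e4 : Finset.Icc 5 7 = ({5, 6, 7} : Finset ℕ) := rfl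
    have hu : ζ * ζ⁻¹ = 1 := mul_inv_cancel₀ hζ0
    rw [hyhdef, hPdef]
    simp only [Finset.sum_range_succ, Finset.sum_range_zero, hzpow]
    norm_num [-inv_pow, e1, e2, e3, e4,
      Finset.prod_insert, Finset.prod_singleton, Finset.prod_empty]
    linear_combination ((1139 : ℂ) * 1 + (-1 : ℂ) * ζ⁻¹ ^ 3 + (-1 : ℂ) * ζ⁻¹ ^ 8 + (-3336 : ℂ) * ζ ^ 1 + (1139 : ℂ) * ζ ^ 1 * ζ⁻¹ ^ 1 + (-1 : ℂ) * ζ ^ 1 * ζ⁻¹ ^ 3 + (-1 : ℂ) * ζ ^ 1 * ζ⁻¹ ^ 4 + (-1 : ℂ) * ζ ^ 1 * ζ⁻¹ ^ 8 + (-1 : ℂ) * ζ ^ 1 * ζ⁻¹ ^ 9 + (3261 : ℂ) * ζ ^ 2 + (-3336 : ℂ) * ζ ^ 2 * ζ⁻¹ ^ 1 + (1139 : ℂ) * ζ ^ 2 * ζ⁻¹ ^ 2 + (-1 : ℂ) * ζ ^ 2 * ζ⁻¹ ^ 4 + (-1 : ℂ) * ζ ^ 2 * ζ⁻¹ ^ 5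 + (-1 : ℂ) * ζ ^ 2 * ζ⁻¹ ^ 8 + (-1 : ℂ) * ζ ^ 2 * ζ⁻¹ ^ 9 + (-1 : ℂ) * ζ ^ 2 * ζ⁻¹ ^ 10 + (-1064 : ℂ) * ζ ^ 3 + (3261 : ℂ) * ζ ^ 3 * ζ⁻¹ ^ 1 + (-3336 : ℂ) * ζ ^ 3 * ζ⁻¹ ^ 2 + (1140 : ℂ) * ζ ^ 3 * ζ⁻¹ ^ 3 + (-1 : ℂ) * ζ ^ 3 * ζ⁻¹ ^ 5 + (-1 : ℂ) * ζ ^ 3 * ζ⁻¹ ^ 6 + (-1 : ℂ) * ζ ^ 3 * ζ⁻¹ ^ 9 + (-1 : ℂ) * ζ ^ 3 * ζ⁻¹ ^ 10 + (-1 : ℂ) * ζ ^ 3 * ζ⁻¹ ^ 11 + (-1064 : ℂ) * ζ ^ 4 * ζ⁻¹ ^ 1 + (3261 : ℂ) * ζ ^ 4 * ζ⁻¹ ^ 2 + (-3335 : ℂ) * ζ ^ 4 * ζ⁻¹ ^ 3 + (1140 : ℂ) * ζ ^ 4 * ζ⁻¹ ^ 4 + (-1 : ℂ) * ζ ^ 4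 * ζ⁻¹ ^ 6 + (-1 : ℂ) * ζ ^ 4 * ζ⁻¹ ^ 7 + (1 : ℂ) * ζ ^ 4 * ζ⁻¹ ^ 8 + (-1 : ℂ) * ζ ^ 4 * ζ⁻¹ ^ 10 + (-1 : ℂ) * ζ ^ 4 * ζ⁻¹ ^ 11 + (-1 : ℂ) * ζ ^ 4 * ζ⁻¹ ^ 12 + (-1064 : ℂ) * ζ ^ 5 * ζ⁻¹ ^ 2 + (3261 : ℂ) * ζ ^ 5 * ζ⁻¹ ^ 3 + (-3335 : ℂ) * ζ ^ 5 * ζ⁻¹ ^ 4 + (1140 : ℂ) * ζ ^ 5 * ζ⁻¹ ^ 5 + (-1 : ℂ) * ζ ^ 5 * ζ⁻¹ ^ 7 + (1 : ℂ) * ζ ^ 5 * ζ⁻¹ ^ 8 + (1 : ℂ) * ζ ^ 5 * ζ⁻¹ ^ 9 + (-1 : ℂ) * ζ ^ 5 * ζ⁻¹ ^ 11 + (-1 : ℂ) * ζ ^ 5 * ζ⁻¹ ^ 12 + (-1 : ℂ) * ζ ^ 5 * ζ⁻¹ ^ 13 + (-1064 : ℂ) * ζ ^ 6 * ζ⁻¹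 ^ 3 + (3261 : ℂ) * ζ ^ 6 * ζ⁻¹ ^ 4 + (-3335 : ℂ) * ζ ^ 6 * ζ⁻¹ ^ 5 + (1140 : ℂ) * ζ ^ 6 * ζ⁻¹ ^ 6 + (1 : ℂ) * ζ ^ 6 * ζ⁻¹ ^ 8 + (1 : ℂ) * ζ ^ 6 * ζ⁻¹ ^ 9 + (1 : ℂ) * ζ ^ 6 * ζ⁻¹ ^ 10 + (-1 : ℂ) * ζ ^ 6 * ζ⁻¹ ^ 12 + (-1 : ℂ) * ζ ^ 6 * ζ⁻¹ ^ 13 + (-1 : ℂ) * ζ ^ 6 * ζ⁻¹ ^ 14 + (-1064 : ℂ) * ζ ^ 7 * ζ⁻¹ ^ 4 + (3261 : ℂ) * ζ ^ 7 * ζ⁻¹ ^ 5 + (-3335 : ℂ) * ζ ^ 7 * ζ⁻¹ ^ 6 + (1140 : ℂ) * ζ ^ 7 * ζ⁻¹ ^ 7 + (1 : ℂ) * ζ ^ 7 * ζ⁻¹ ^ 8 + (1 : ℂ) * ζ ^ 7 * ζ⁻¹ ^ 9 + (1 : ℂ) * ζ ^ 7 * ζ⁻¹ ^ 10 + (1 :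 ℂ) * ζ ^ 7 * ζ⁻¹ ^ 11 + (-1 : ℂ) * ζ ^ 7 * ζ⁻¹ ^ 13 + (-1 : ℂ) * ζ ^ 7 * ζ⁻¹ ^ 14 + (-1064 : ℂ) * ζ ^ 8 * ζ⁻¹ ^ 5 + (3261 : ℂ) * ζ ^ 8 * ζ⁻¹ ^ 6 + (-3335 : ℂ) * ζ ^ 8 * ζ⁻¹ ^ 7 + (1140 : ℂ) * ζ ^ 8 * ζ⁻¹ ^ 8 + (1 : ℂ) * ζ ^ 8 * ζ⁻¹ ^ 9 + (1 : ℂ) * ζ ^ 8 * ζ⁻¹ ^ 10 + (1 : ℂ) * ζ ^ 8 * ζ⁻¹ ^ 11 + (1 : ℂ) * ζ ^ 8 * ζ⁻¹ ^ 12 + (-1 : ℂ) * ζ ^ 8 * ζ⁻¹ ^ 14 + (-1064 : ℂ) * ζ ^ 9 * ζ⁻¹ ^ 6 + (3261 : ℂ) * ζ ^ 9 * ζ⁻¹ ^ 7 + (-3336 : ℂ) * ζ ^ 9 * ζ⁻¹ ^ 8 + (1140 : ℂ) * ζ ^ 9 * ζ⁻¹ ^ 9 + (1 : ℂ) * ζ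 ^ 9 * ζ⁻¹ ^ 10 + (1 : ℂ) * ζ ^ 9 * ζ⁻¹ ^ 11 + (1 : ℂ) * ζ ^ 9 * ζ⁻¹ ^ 12 + (1 : ℂ) * ζ ^ 9 * ζ⁻¹ ^ 13 + (-1064 : ℂ) * ζ ^ 10 * ζ⁻¹ ^ 7 + (3260 : ℂ) * ζ ^ 10 * ζ⁻¹ ^ 8 + (-3336 : ℂ) * ζ ^ 10 * ζ⁻¹ ^ 9 + (1140 : ℂ) * ζ ^ 10 * ζ⁻¹ ^ 10 + (1 : ℂ) * ζ ^ 10 * ζ⁻¹ ^ 11 + (1 : ℂ) * ζ ^ 10 * ζ⁻¹ ^ 12 + (1 : ℂ) * ζ ^ 10 * ζ⁻¹ ^ 13 + (1 : ℂ) * ζ ^ 10 * ζ⁻¹ ^ 14 + (-1065 : ℂ) * ζ ^ 11 * ζ⁻¹ ^ 8 + (3260 : ℂ) * ζ ^ 11 * ζ⁻¹ ^ 9 + (-3336 : ℂ) * ζ ^ 11 * ζ⁻¹ ^ 10 + (1140 : ℂ) * ζ ^ 11 * ζ⁻¹ ^ 11 + (1 : ℂ) * ζ ^ 11 * ζ⁻¹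 ^ 12 + (1 : ℂ) * ζ ^ 11 * ζ⁻¹ ^ 13 + (1 : ℂ) * ζ ^ 11 * ζ⁻¹ ^ 14 + (-1065 : ℂ) * ζ ^ 12 * ζ⁻¹ ^ 9 + (3260 : ℂ) * ζ ^ 12 * ζ⁻¹ ^ 10 + (-3336 : ℂ) * ζ ^ 12 * ζ⁻¹ ^ 11 + (1140 : ℂ) * ζ ^ 12 * ζ⁻¹ ^ 12 + (1 : ℂ) * ζ ^ 12 * ζ⁻¹ ^ 13 + (1 : ℂ) * ζ ^ 12 * ζ⁻¹ ^ 14 + (-1065 : ℂ) * ζ ^ 13 * ζ⁻¹ ^ 10 + (3260 : ℂ) * ζ ^ 13 * ζ⁻¹ ^ 11 + (-3336 : ℂ) * ζ ^ 13 * ζ⁻¹ ^ 12 + (1140 : ℂ) * ζ ^ 13 * ζ⁻¹ ^ 13 + (1 : ℂ) * ζ ^ 13 * ζ⁻¹ ^ 14 + (-1065 : ℂ) * ζ ^ 14 * ζ⁻¹ ^ 11 + (3260 : ℂ) * ζ ^ 14 * ζ⁻¹ ^ 12 + (-3336 : ℂ) * ζ ^ 14 * ζ⁻¹ ^ 13 +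 (1140 : ℂ) * ζ ^ 14 * ζ⁻¹ ^ 14 + (-1065 : ℂ) * ζ ^ 15 * ζ⁻¹ ^ 12 + (3260 : ℂ) * ζ ^ 15 * ζ⁻¹ ^ 13 + (-3336 : ℂ) * ζ ^ 15 * ζ⁻¹ ^ 14 + (-1065 : ℂ) * ζ ^ 16 * ζ⁻¹ ^ 13 + (3260 : ℂ) * ζ ^ 16 * ζ⁻¹ ^ 14 + (-1065 : ℂ) * ζ ^ 17 * ζ⁻¹ ^ 14) * hu
  rw [hsplit, hhead, htail]
  push_cast
  ring
end
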